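/- For ADAPD-OG iterates, if η < 1/L, then for all k ≥ 0: L_η(X^{k+1}, X0^k; Y^k, Z^k) − L_η(X^k, X0^k; Y^k, Z^k) ≤ ((Lη − 1)/(2η)) ‖X^{k+1} − X^k‖_F². -/

import Mathlib

open Matrix Finset

attribute [local instance] Matrix.frobeniusNormedAddCommGroup Matrix.frobeniusNormedSpace

noncomputable section

variable {N p : ℕ}

/-- Frobenius inner product on `N × p` real matrices. -/
def frobInner (A B : Matrix (Fin N) (Fin p) ℝ) : ℝ := ∑ i, ∑ j, A i j * B i j

/-- Squared Frobenius norm. -/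
def frobSq (A : Matrix (Fin N) (Fin p) ℝ) : ℝ := frobInner A A

/-- Frobenius norm. -/
def frobNorm (A : Matrix (Fin N) (Fin p) ℝ) : ℝ := Real.sqrt (frobInner A A)

/-- The continuous linear functional `H ↦ ⟨G, H⟩_F`. -/
def frobCLM (G : Matrix (Fin N) (Fin p) ℝ) : Matrix (Fin N) (Fin p) ℝ →L[ℝ] ℝ :=
  LinearMap.toContinuousLinearMap
    { toFun := fun H => frobInner G H
      map_add' := by
        intro x y
        simp [frobInner, Matrix.add_apply, mul_add, Finset.sum_add_distrib]
      map_smul' := by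
        intro c x
        simp [frobInner, Matrix.smul_apply, Finset.mul_sum]
        ring_nf
        apply Finset.sum_congr rfl; intro i _
        apply Finset.sum_congr rfl; intro j _; ring }

/-- Spectral norm (operator 2-norm) of a square real matrix. -/
def specNorm {N : ℕ} (M : Matrix (Fin N) (Fin N) ℝ) : ℝ :=
  ‖Matrix.toEuclideanCLM (𝕜 := ℝ) M‖

/-- The all-ones `N × N` matrix. -/
def onesMat (N : ℕ) : Matrix (Fin N) (Fin N) ℝ := fun _ _ => 1

/-- Quadratic form `‖A‖_M² := ⟨A, M A⟩_F` for a symmetric `M` (possibly negative). -/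
def quadForm (M : Matrix (Fin N) (Fin N) ℝ) (A : Matrix (Fin N) (Fin p) ℝ) : ℝ :=
  frobInner A (M * A)

/-- Augmented Lagrangian `L_η(X, X0; Y, Z)`, where `S` plays the role of `√(I−W)`. -/
def Lag (F : Matrix (Fin N) (Fin p) ℝ → ℝ) (S : Matrix (Fin N) (Fin N) ℝ) (η : ℝ)
    (X X0 Y Z : Matrix (Fin N) (Fin p) ℝ) : ℝ :=
  F X + frobInner Y (X - X0) + (2*η)⁻¹ * frobSq (X - X0)
    + frobInner Z (S * X0) + (2*η)⁻¹ * frobSq (S * X0)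

/-
The `X`-step is a gradient step on the `X`-block of the augmented Lagrangian, linearised at `X^k`:
`X^{k+1} − X0^k = −η (∇F(X^k) + Y^k)`. Expanding the quadratic coupling term around `X^{k+1}` turns
the change of `L_η` into `F(X^{k+1}) − F(X^k) − ⟨∇F(X^k), X^{k+1} − X^k⟩ − ‖X^{k+1} − X^k‖²/(2η)`,
and the descent lemma for the `L`-smooth `F` bounds the first three terms by
`(L/2) ‖X^{k+1} − X^k‖²`.
-/

theorem descent_lemma {E : Type*} [NormedAddCommGroup E] [NormedSpace ℝ E] {f : E → ℝ}
    {f' : E → E →L[ℝ] ℝ} {L : ℝ} (hf : ∀ u, HasFDerivAt f (f' u) u)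
    (hL : ∀ u v h, f' u h - f' v h ≤ L * ‖u - v‖ * ‖h‖) (x d : E) :
    f (x + d) ≤ f x + f' x d + L / 2 * ‖d‖ ^ 2 := by
  have hline : ∀ t : ℝ, HasDerivAt (fun t => f (x + t • d)) (f' (x + t • d) d) t := fun t =>
    (hf _).comp_hasDerivAt t (by simpa using ((hasDerivAt_id t).smul_const d).const_add x)
  have hmodel : ∀ t : ℝ, HasDerivAt (fun t => f x + t * f' x d + L / 2 * t ^ 2 * ‖d‖ ^ 2)
      (f' x d + L * t * ‖d‖ ^ 2) t := fun t => by
    refine (((hasDerivAt_id t).mul_const (f' x d)).const_add (f x) |>.add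
      (((hasDerivAt_pow 2 t).const_mul (L / 2)).mul_const (‖d‖ ^ 2))).congr_deriv ?_
    simp only [Nat.cast_ofNat]
    ring
  have hslope : ∀ t ≥ (0 : ℝ), f' (x + t • d) d ≤ f' x d + L * t * ‖d‖ ^ 2 := fun t ht => by
    have := hL (x + t • d) x d
    rw [add_sub_cancel_left, norm_smul, Real.norm_of_nonneg ht] at this
    nlinarith
  have := image_le_of_deriv_right_le_deriv_boundary (a := 0) (b := 1)
    (fun t _ => (hline t).continuousAt.continuousWithinAt) (fun t _ => (hline t).hasDerivWithinAt)
    (by simp) (fun t _ => (hmodel t).continuousAt.continuousWithinAt)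
    (fun t _ => (hmodel t).hasDerivWithinAt) (fun t ht => hslope t ht.1)
    (Set.right_mem_Icc.2 zero_le_one)
  simpa using this

theorem coupling_change_of_step {E : Type*} [NormedAddCommGroup E] [InnerProductSpace ℝ E]
    {x x' x₀ g y : E} {η : ℝ} (hη : η ≠ 0) (hx' : x' = x₀ - η • (g + y)) :
    (inner ℝ y (x' - x₀) + (2 * η)⁻¹ * ‖x' - x₀‖ ^ 2)
      - (inner ℝ y (x - x₀) + (2 * η)⁻¹ * ‖x - x₀‖ ^ 2)
      = -inner ℝ g (x' - x) - (2 * η)⁻¹ * ‖x' - x‖ ^ 2 := by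
  have hsplit : x - x₀ = (x' - x₀) - (x' - x) := by abel
  have hcross : inner ℝ (x' - x₀) (x' - x) = -η * (inner ℝ g (x' - x) + inner ℝ y (x' - x)) := by
    rw [show x' - x₀ = -η • (g + y) by rw [hx', neg_smul]; abel, real_inner_smul_left,
      inner_add_left]
  rw [hsplit, inner_sub_right y (x' - x₀), norm_sub_sq_real (x' - x₀), hcross]
  field_simp
  ring

/-- Rows as a vector of the Hilbert sum `⨁ᵢ ℝᵖ`: this makes `frobInner` a genuine inner product,
whose norm is the Frobenius norm by definition. -/
def frobLp : Matrix (Fin N) (Fin p) ℝ →ₗ[ℝ] PiLp 2 (fun _ : Fin N => EuclideanSpace ℝ (Fin p)) where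
  toFun A := WithLp.toLp 2 fun i => WithLp.toLp 2 (A i)
  map_add' _ _ := rfl
  map_smul' _ _ := rfl

lemma norm_frobLp (A : Matrix (Fin N) (Fin p) ℝ) : ‖frobLp A‖ = ‖A‖ := rfl

lemma inner_frobLp (A B : Matrix (Fin N) (Fin p) ℝ) :
    inner ℝ (frobLp A) (frobLp B) = frobInner A B := by
  simp only [PiLp.inner_apply, RCLike.inner_apply, Real.ringHom_apply, mul_comm, frobInner]
  rfl

lemma frobNorm_eq_norm (A : Matrix (Fin N) (Fin p) ℝ) : frobNorm A = ‖A‖ := by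
  rw [frobNorm, ← inner_frobLp, ← norm_frobLp, norm_eq_sqrt_real_inner]

lemma frobSq_eq_norm_sq (A : Matrix (Fin N) (Fin p) ℝ) : frobSq A = ‖A‖ ^ 2 := by
  rw [frobSq, ← inner_frobLp, real_inner_self_eq_norm_sq, norm_frobLp]

lemma frobInner_le_norm_mul_norm (A B : Matrix (Fin N) (Fin p) ℝ) :
    frobInner A B ≤ ‖A‖ * ‖B‖ := by
  rw [← inner_frobLp, ← norm_frobLp, ← norm_frobLp]
  exact real_inner_le_norm _ _

lemma frobInner_sub_left (A B C : Matrix (Fin N) (Fin p) ℝ) :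
    frobInner (A - B) C = frobInner A C - frobInner B C := by
  simp only [← inner_frobLp, map_sub, inner_sub_left]

lemma frobCLM_apply (G A : Matrix (Fin N) (Fin p) ℝ) : frobCLM G A = frobInner G A := rfl

lemma Lag_sub_Lag_of_step {F : Matrix (Fin N) (Fin p) ℝ → ℝ} {S : Matrix (Fin N) (Fin N) ℝ}
    {η : ℝ} {X X' X0 Y Z g : Matrix (Fin N) (Fin p) ℝ} (hη : η ≠ 0)
    (hX' : X' = X0 - η • (g + Y)) :
    Lag F S η X' X0 Y Z - Lag F S η X X0 Y Z
      = F X' - F X - frobCLM g (X' - X) - (2 * η)⁻¹ * ‖X' - X‖ ^ 2 := by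
  have h := coupling_change_of_step (x := frobLp X) (x' := frobLp X') (x₀ := frobLp X0)
    (g := frobLp g) (y := frobLp Y) hη (by rw [hX']; simp only [map_sub, map_smul, map_add])
  simp only [← map_sub, inner_frobLp, norm_frobLp] at h
  simp only [Lag, frobSq_eq_norm_sq, frobCLM_apply]
  linarith

theorem adapd_og_x_decrease_general (N p : ℕ)
    (S : Matrix (Fin N) (Fin N) ℝ)
    -- objective: `F` is `L`-smooth (gradient `G` w.r.t. the Frobenius inner product)
    (L : ℝ)
    (F : Matrix (Fin N) (Fin p) ℝ → ℝ)
    (G : Matrix (Fin N) (Fin p) ℝ → Matrix (Fin N) (Fin p) ℝ)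
    (hgrad : ∀ U, HasFDerivAt F (frobCLM (G U)) U)
    (hLip : ∀ U V, frobNorm (G U - G V) ≤ L * frobNorm (U - V))
    -- ADAPD-OG iterates with parameter `η`
    (η : ℝ) (hη : 0 < η)
    (X X0 Y Z : ℕ → Matrix (Fin N) (Fin p) ℝ)
    (hXit : ∀ k, X (k+1) = X0 k - η • (G (X k) + Y k)) :
    ∀ k : ℕ,
      Lag F S η (X (k+1)) (X0 k) (Y k) (Z k) - Lag F S η (X k) (X0 k) (Y k) (Z k)
        ≤ (L*η - 1)/(2*η) * frobSq (X (k+1) - X k) := by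
  intro k
  have hsmooth : ∀ U V H, frobCLM (G U) H - frobCLM (G V) H ≤ L * ‖U - V‖ * ‖H‖ := fun U V H =>
    calc frobCLM (G U) H - frobCLM (G V) H = frobInner (G U - G V) H :=
          (frobInner_sub_left _ _ _).symm
      _ ≤ ‖G U - G V‖ * ‖H‖ := frobInner_le_norm_mul_norm _ _
      _ ≤ L * ‖U - V‖ * ‖H‖ := by
          gcongr
          simpa only [frobNorm_eq_norm] using hLip U V
  have hdescent : F (X (k+1)) ≤ F (X k) + frobCLM (G (X k)) (X (k+1) - X k)
      + L / 2 * ‖X (k+1) - X k‖ ^ 2 := by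
    have h := descent_lemma hgrad hsmooth (X k) (X (k+1) - X k)
    rw [add_sub_cancel] at h
    -- `h` is stated for the Frobenius-norm topology on matrices, `hdescent` for the (defeq)
    -- product topology of `frobCLM`; `exact` unfolds one to the other, `linarith` would not.
    exact h
  have hcoeff : (L * η - 1) / (2 * η) = L / 2 - (2 * η)⁻¹ := by field_simp
  rw [Lag_sub_Lag_of_step hη.ne' (hXit k), frobSq_eq_norm_sq, hcoeff, sub_mul]
  linarith

/-- Lemma: descent in the one-gradient `X`-update of ADAPD-OG. -/
theorem adapd_og_x_decrease (N p : ℕ) (hN : 0 < N) (hp : 0 < p)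
    -- mixing matrix assumptions
    (W : Matrix (Fin N) (Fin N) ℝ) (hWsym : Wᵀ = W)
    (hWub : Matrix.PosSemidef (1 - W)) (hWlb : Matrix.PosDef (1 + W))
    (hWnull : ∀ v : Fin N → ℝ, (1 - W).mulVec v = 0 ↔ ∃ c : ℝ, v = fun _ => c)
    (ρ : ℝ) (hρdef : ρ = specNorm (W - (N:ℝ)⁻¹ • onesMat N)) (hρlt : ρ < 1)
    -- `S` is the unique positive semidefinite square root of `I − W`
    (S : Matrix (Fin N) (Fin N) ℝ) (hSpsd : S.PosSemidef) (hSsq : S * S = 1 - W)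
    -- objective: `F` is `L`-smooth (gradient `G` w.r.t. the Frobenius inner product)
    -- and bounded below by `flb`
    (L flb : ℝ) (hL : 0 < L)
    (F : Matrix (Fin N) (Fin p) ℝ → ℝ)
    (G : Matrix (Fin N) (Fin p) ℝ → Matrix (Fin N) (Fin p) ℝ)
    (hgrad : ∀ U, HasFDerivAt F (frobCLM (G U)) U)
    (hLip : ∀ U V, frobNorm (G U - G V) ≤ L * frobNorm (U - V))
    (hlb : ∀ U, flb ≤ F U)
    -- ADAPD-OG iterates with parameter `η`
    (η : ℝ) (hη : 0 < η)
    (X X0 Y Z : ℕ → Matrix (Fin N) (Fin p) ℝ)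
    (hZ0 : ∃ U0 : Matrix (Fin N) (Fin p) ℝ, Z 0 = S * U0)
    (hY0 : Y 0 = - G (X 0))
    (hXit : ∀ k, X (k+1) = X0 k - η • (G (X k) + Y k))
    (hX0it : ∀ k, X0 (k+1) = (2:ℝ)⁻¹ • (W * X0 k + X (k+1) + η • (Y k - S * Z k)))
    (hYit : ∀ k, Y (k+1) = Y k + η⁻¹ • (X (k+1) - X0 (k+1)))
    (hZit : ∀ k, Z (k+1) = Z k + η⁻¹ • (S * X0 (k+1)))
    (hη1 : η < 1/L) :
    ∀ k : ℕ,
      Lag F S η (X (k+1)) (X0 k) (Y k) (Z k) - Lag F S η (X k) (X0 k) (Y k) (Z k)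
        ≤ (L*η - 1)/(2*η) * frobSq (X (k+1) - X k) :=
  adapd_og_x_decrease_general N p S L F G hgrad hLip η hη X X0 Y Z hXit
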